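/- Let α, β ∈ (0,1] with β < α, f : [a,∞) → ℝ α-differentiable on some (a, a+ε), and suppose lim_{t→a+} T_a^α f(t) exists and is finite. Then lim_{t→a+} T_a^β f(t) = 0; in particular, under the original limit-based lower-terminal definition, T_a^β f(a) = 0 and does not depend on the value f(a). -/

import Mathlib

/-! For `t > a` the increment `θ (t - a) ^ (1 - β)` of order `β` is the increment of order
`α` taken with step `θ (t - a) ^ (α - β)`, so `T_a^β f t = (t - a) ^ (α - β) T_a^α f t`.
As `t → a⁺` the factor tends to `0` because `β < α`, while `T_a^α f t` tends to `L`. -/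

open Filter Topology Set

/-- The conformable (left-sided) derivative of order `α` with lower terminal `a`:
`f` has conformable derivative `L` at `t` if the difference quotient
`(f (t + θ*(t-a)^(1-α)) - f t)/θ` tends to `L` as `θ → 0`. -/
def HasConfDerivAt (a α : ℝ) (f : ℝ → ℝ) (t L : ℝ) : Prop :=
  Tendsto (fun θ : ℝ => (f (t + θ * (t - a) ^ (1 - α)) - f t) / θ) (𝓝[≠] (0:ℝ)) (𝓝 L)

/-- The conformable integral of order `α` with lower terminal `a`. -/
noncomputable def confInt (a α : ℝ) (f : ℝ → ℝ) (t : ℝ) : ℝ :=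
  ∫ s in a..t, (s - a) ^ (α - 1) * f s

theorem tendsto_mul_const_nhdsNE_zero {c : ℝ} (hc : c ≠ 0) :
    Tendsto (fun θ : ℝ => θ * c) (𝓝[≠] 0) (𝓝[≠] 0) := by
  have hmaps : MapsTo (fun θ : ℝ => θ * c) {0}ᶜ {0}ᶜ := fun θ hθ => mul_ne_zero hθ hc
  simpa using ((continuous_mul_const c).continuousWithinAt (x := 0)).tendsto_nhdsWithin hmaps

theorem tendsto_sub_rpow_nhdsGT {a p : ℝ} (hp : 0 < p) :
    Tendsto (fun t : ℝ => (t - a) ^ p) (𝓝[>] a) (𝓝 0) := by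
  have h := ((continuous_sub_right a).rpow_const fun _ => Or.inr hp.le).tendsto a
  rw [sub_self, Real.zero_rpow hp.ne'] at h
  exact h.mono_left nhdsWithin_le_nhds

theorem HasConfDerivAt.change_order {a α β t L : ℝ} {f : ℝ → ℝ} (ht : a < t)
    (h : HasConfDerivAt a α f t L) : HasConfDerivAt a β f t ((t - a) ^ (α - β) * L) := by
  have hta : 0 < t - a := sub_pos.2 ht
  set c := (t - a) ^ (α - β)
  have hc : c ≠ 0 := (Real.rpow_pos_of_pos hta _).ne'
  refine ((h.comp (tendsto_mul_const_nhdsNE_zero hc)).const_mul c).congr' ?_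
  filter_upwards [self_mem_nhdsWithin] with θ (hθ : θ ≠ 0)
  have hstep : θ * c * (t - a) ^ (1 - α) = θ * (t - a) ^ (1 - β) := by
    rw [mul_assoc, ← Real.rpow_add hta]
    ring_nf
  simp only [Function.comp_apply, hstep]
  field_simp

theorem conf_deriv_lower_order_limit_zero_general (a α β ε L : ℝ) (f T : ℝ → ℝ)
    (hβα : β < α)
    (hT : ∀ t ∈ Set.Ioo a (a + ε), HasConfDerivAt a α f t (T t))
    (hL : Tendsto T (𝓝[>] a) (𝓝 L)) :
    ∃ S : ℝ → ℝ,
      (∀ t ∈ Set.Ioo a (a + ε), HasConfDerivAt a β f t (S t)) ∧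
        Tendsto S (𝓝[>] a) (𝓝 0) :=
  ⟨fun t => (t - a) ^ (α - β) * T t, fun t ht => (hT t ht).change_order ht.1,
    by simpa using (tendsto_sub_rpow_nhdsGT (sub_pos.2 hβα)).mul hL⟩

theorem conf_deriv_lower_order_limit_zero (a α β ε L : ℝ) (f T : ℝ → ℝ)
    (hα : α ∈ Set.Ioc (0:ℝ) 1) (hβ : β ∈ Set.Ioc (0:ℝ) 1) (hβα : β < α)
    (hε : 0 < ε)
    (hT : ∀ t ∈ Set.Ioo a (a + ε), HasConfDerivAt a α f t (T t))
    (hL : Tendsto T (𝓝[>] a) (𝓝 L)) :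
    ∃ S : ℝ → ℝ,
      (∀ t ∈ Set.Ioo a (a + ε), HasConfDerivAt a β f t (S t)) ∧
        Tendsto S (𝓝[>] a) (𝓝 0) :=
  conf_deriv_lower_order_limit_zero_general a α β ε L f T hβα hT hL
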